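/- arXiv:2004.10368 — 2 statements merged into one kernel-verified Lean document; each statement's English description precedes it below -/
import Mathlib

section
/- For any A ∈ C^{n×n×n}, each of the three hypermatrices Prod(A, A^{⊤²}, A^⊤), Prod(A^⊤, A, A^{⊤²}), and Prod(A^{⊤²}, A^⊤, A) is symmetric, i.e., equal to its own transpose. -/
noncomputable def bmProd {n : ℕ} (A B C : Fin n → Fin n → Fin n → ℂ) :
    Fin n → Fin n → Fin n → ℂ :=
  fun i j k => ∑ t, A i t k * B i j t * C t j k

noncomputable def htr {n : ℕ} (A : Fin n → Fin n → Fin n → ℂ) : Fin n → Fin n → Fin n → ℂ :=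
  fun i j k => A k i j

theorem symmetric_products_of_transposes {n : ℕ} (A : Fin n → Fin n → Fin n → ℂ) :
    htr (bmProd A (htr (htr A)) (htr A)) = bmProd A (htr (htr A)) (htr A) ∧
    htr (bmProd (htr A) A (htr (htr A))) = bmProd (htr A) A (htr (htr A)) ∧
    htr (bmProd (htr (htr A)) (htr A) A) = bmProd (htr (htr A)) (htr A) A := by
  refine ⟨?_, ?_, ?_⟩ <;> funext i j k <;> simp only [bmProd, htr] <;>
    exact Finset.sum_congr rfl fun t _ => by ring
end

section
/- Let X ∈ C^{2×2×2} with slices X[:,:,0] = [[x₀,x₂],[x₁,x₃]] and X[:,:,1] = [[x₄,x₆],[x₅,x₇]]. Then X satisfies the orthogonality condition Prod(X, X^{⊤²}, X^⊤) = Δ if and only if x₁x₄x₅ + x₃x₆x₇ = 0, x₀x₁x₄ + x₂x₃x₆ = 0, x₀³ + x₂³ = 1, and x₅³ + x₇³ = 1. -/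
noncomputable def hdelta {n : ℕ} : Fin n → Fin n → Fin n → ℂ :=
  fun i j k => if i = j ∧ j = k then 1 else 0

theorem orthogonality_constraints (X : Fin 2 → Fin 2 → Fin 2 → ℂ) :
    bmProd X (htr (htr X)) (htr X) = hdelta ↔
      (X 1 0 0 * X 0 0 1 * X 1 0 1 + X 1 1 0 * X 0 1 1 * X 1 1 1 = 0 ∧
       X 0 0 0 * X 1 0 0 * X 0 0 1 + X 0 1 0 * X 1 1 0 * X 0 1 1 = 0 ∧
       X 0 0 0 ^ 3 + X 0 1 0 ^ 3 = 1 ∧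
       X 1 0 1 ^ 3 + X 1 1 1 ^ 3 = 1) := by
  constructor
  · intro h
    have h' : ∀ i j k, (∑ t, X i t k * X j t i * X k t j) = hdelta i j k := by
      intro i j k
      have := congrFun (congrFun (congrFun h i) j) k
      simpa [bmProd, htr] using this
    have e110 := h' 1 1 0
    have e001 := h' 0 0 1
    have e000 := h' 0 0 0
    have e111 := h' 1 1 1
    simp [hdelta, Fin.sum_univ_two] at e110 e001 e000 e111
    refine ⟨by linear_combination e110, by linear_combination e001,
      by linear_combination e000, by linear_combination e111⟩
  · rintro ⟨h1, h2, h3, h4⟩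
    funext i j k
    fin_cases i <;> fin_cases j <;> fin_cases k <;>
      simp [bmProd, htr, hdelta, Fin.sum_univ_two] <;>
      first | linear_combination h1 | linear_combination h2 | linear_combination h3 | linear_combination h4
end
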